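/- The outcome of Capped Round Robin on a single category is F-EF1: for every pair of agents i, j there exists Y ⊆ X_j with |Y| ≤ 1 such that v_i(X_i) ≥ max{v_i(S) : S ⊆ X_j \ Y, |S| ≤ k_i}. -/
import Mathlib

/-- The best unallocated item for a picker with valuation `w`: an item of `L` of
maximum value (ties broken by the linear order on items). -/
noncomputable def bestItem {α : Type*} [DecidableEq α] [LinearOrder α] [Inhabited α]
    (w : α → ℕ) (L : Finset α) : α :=
  if h : (L.filter (fun g => ∀ g' ∈ L, w g' ≤ w g)).Nonempty
  then (L.filter (fun g => ∀ g' ∈ L, w g' ≤ w g)).min' h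
  else default

/-- Capped Round Robin: in turn `t`, agent `σ t` picks her best remaining item unless
she has reached her capacity, in which case she is skipped; the process runs until the
pool `L` is exhausted (the `fuel` parameter only ensures termination and is taken large
enough that it never runs out). -/
noncomputable def crr {α : Type*} [DecidableEq α] [LinearOrder α] [Inhabited α] {n : ℕ}
    (k : Fin n → ℕ) (v : Fin n → α → ℕ) (σ : ℕ → Fin n) :
    ℕ → ℕ → Finset α → (Fin n → Finset α) → Fin n → Finset α
  | 0, _, _, X => X
  | fuel + 1, t, L, X =>
    if L.Nonempty then
      if (X (σ t)).card < k (σ t) then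
        crr k v σ fuel (t + 1) (L.erase (bestItem (v (σ t)) L))
          (Function.update X (σ t) (insert (bestItem (v (σ t)) L) (X (σ t))))
      else crr k v σ fuel (t + 1) L X
    else X

section Aux
variable {α : Type*} [DecidableEq α] [LinearOrder α] [Inhabited α] {n : ℕ}
  (k : Fin n → ℕ) (v : Fin n → α → ℕ) (σ : ℕ → Fin n)

lemma bestItem_spec (w : α → ℕ) {L : Finset α} (h : L.Nonempty) :
    bestItem w L ∈ L ∧ ∀ g' ∈ L, w g' ≤ w (bestItem w L) := by
  obtain ⟨b, hb, hmax⟩ := Finset.exists_max_image L w h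
  have hne : (L.filter (fun g => ∀ g' ∈ L, w g' ≤ w g)).Nonempty :=
    ⟨b, Finset.mem_filter.2 ⟨hb, hmax⟩⟩
  rw [bestItem, dif_pos hne]
  have hm := Finset.min'_mem _ hne
  exact ⟨(Finset.mem_filter.1 hm).1, (Finset.mem_filter.1 hm).2⟩

lemma crr_zero (t : ℕ) (L : Finset α) (X : Fin n → Finset α) :
    crr k v σ 0 t L X = X := rfl

lemma crr_succ (fuel t : ℕ) (L : Finset α) (X : Fin n → Finset α) :
    crr k v σ (fuel + 1) t L X =
      if L.Nonempty then
        if (X (σ t)).card < k (σ t) then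
          crr k v σ fuel (t + 1) (L.erase (bestItem (v (σ t)) L))
            (Function.update X (σ t) (insert (bestItem (v (σ t)) L) (X (σ t))))
        else crr k v σ fuel (t + 1) L X
      else X := rfl

lemma crr_mono : ∀ (fuel t : ℕ) (L : Finset α) (X : Fin n → Finset α) (a : Fin n),
    X a ⊆ crr k v σ fuel t L X a := by
  intro fuel
  induction fuel with
  | zero => intro t L X a; simp [crr]
  | succ fuel ih =>
    intro t L X a
    rw [crr_succ]
    split_ifs with h1 h2
    · refine Finset.Subset.trans ?_ (ih _ _ _ a)
      by_cases hab : a = σ t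
      · subst hab; rw [Function.update_self]; exact Finset.subset_insert _ _
      · rw [Function.update_of_ne hab]
    · exact ih _ _ _ a
    · exact Finset.Subset.refl _

lemma crr_subset : ∀ (fuel t : ℕ) (L : Finset α) (X : Fin n → Finset α) (a : Fin n),
    crr k v σ fuel t L X a ⊆ X a ∪ L := by
  intro fuel
  induction fuel with
  | zero => intro t L X a; simp [crr]
  | succ fuel ih =>
    intro t L X a
    rw [crr_succ]
    split_ifs with h1 h2
    · refine Finset.Subset.trans (ih _ _ _ a) ?_
      have hgL := (bestItem_spec (v (σ t)) h1).1
      by_cases hab : a = σ t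
      · subst hab
        rw [Function.update_self]
        intro x hx
        simp only [Finset.mem_union, Finset.mem_insert, Finset.mem_erase] at hx ⊢
        rcases hx with (rfl | hx) | hx
        · exact Or.inr hgL
        · exact Or.inl hx
        · exact Or.inr hx.2
      · rw [Function.update_of_ne hab]
        exact Finset.union_subset_union_right (Finset.erase_subset _ _)
    · exact ih _ _ _ a
    · exact Finset.subset_union_left

lemma crr_capped : ∀ (fuel t : ℕ) (L : Finset α) (X : Fin n → Finset α) (a : Fin n),
    k a ≤ (X a).card → crr k v σ fuel t L X a = X a := by
  intro fuel
  induction fuel with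
  | zero => intro t L X a _; simp [crr]
  | succ fuel ih =>
    intro t L X a ha
    rw [crr_succ]
    split_ifs with h1 h2
    · have hab : a ≠ σ t := by
        intro h; subst h; omega
      have hXa : (Function.update X (σ t) (insert (bestItem (v (σ t)) L) (X (σ t)))) a = X a :=
        Function.update_of_ne hab _ _
      rw [ih _ _ _ a (by rw [hXa]; exact ha), hXa]
    · exact ih _ _ _ a ha
    · rfl

end Aux

def Before {n : ℕ} (σ : ℕ → Fin n) (t : ℕ) (i j : Fin n) : Prop :=
  ∃ d, σ (t + d) = i ∧ ∀ e ≤ d, σ (t + e) ≠ j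

lemma before_ne {n : ℕ} {σ : ℕ → Fin n} {t : ℕ} {i j : Fin n} (h : Before σ t i j) :
    σ t ≠ j := by
  obtain ⟨d, _, he⟩ := h
  simpa using he 0 (Nat.zero_le _)

lemma before_step {n : ℕ} {σ : ℕ → Fin n} {t : ℕ} {i j : Fin n} (hi : σ t ≠ i)
    (h : Before σ t i j) : Before σ (t + 1) i j := by
  obtain ⟨d, hd, he⟩ := h
  match d with
  | 0 => exact absurd (by simpa using hd) hi
  | d + 1 =>
    refine ⟨d, by rw [show t + 1 + d = t + (d + 1) by omega]; exact hd, fun e hee => ?_⟩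
    rw [show t + 1 + e = t + (e + 1) by omega]
    exact he (e + 1) (by omega)

lemma before_of_pick {n : ℕ} {σ : ℕ → Fin n}
    (hex : ∀ t a, ∃ d, d < n ∧ σ (t + d) = a)
    (hinj : ∀ x y, σ x = σ y → x % n = y % n)
    {t : ℕ} {i j : Fin n} (hij : i ≠ j) (hj : σ t = j) : Before σ (t + 1) i j := by
  obtain ⟨d, hdn, hdi⟩ := hex (t + 1) i
  refine ⟨d, hdi, fun e hee hje => ?_⟩
  have h1 : (t + 1 + e) % n = t % n := hinj _ _ (hje.trans hj.symm)
  have hdvd : n ∣ (t + 1 + e) - t := (Nat.modEq_iff_dvd' (by omega)).1 h1.symm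
  have h2 : n ∣ 1 + e := by rwa [show t + 1 + e - t = 1 + e by omega] at hdvd
  have h3 : 1 + e = n := by
    have := Nat.le_of_dvd (by omega) h2
    omega
  have hed : e = d := by omega
  subst hed
  exact absurd (hdi.symm.trans hje) hij

lemma crr_key {α : Type*} [DecidableEq α] [LinearOrder α] [Inhabited α] {n : ℕ}
    (k : Fin n → ℕ) (v : Fin n → α → ℕ) (σ : ℕ → Fin n)
    (hex : ∀ t a, ∃ d, d < n ∧ σ (t + d) = a)
    (hinj : ∀ x y, σ x = σ y → x % n = y % n) :
    ∀ (fuel t : ℕ) (L : Finset α) (X₀ : Fin n → Finset α), (∀ a, Disjoint (X₀ a) L) →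
      ((∀ i j : Fin n, i ≠ j → Before σ t i j →
         ∀ S ⊆ crr k v σ fuel t L X₀ j \ X₀ j, S.card + (X₀ i).card ≤ k i →
           S.sum (v i) ≤ (crr k v σ fuel t L X₀ i \ X₀ i).sum (v i)) ∧
       (∀ i j : Fin n, i ≠ j → ∃ Y ⊆ crr k v σ fuel t L X₀ j \ X₀ j, Y.card ≤ 1 ∧
         ∀ S ⊆ (crr k v σ fuel t L X₀ j \ X₀ j) \ Y, S.card + (X₀ i).card ≤ k i →
           S.sum (v i) ≤ (crr k v σ fuel t L X₀ i \ X₀ i).sum (v i))) := by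
  intro fuel
  induction fuel with
  | zero =>
    intro t L X₀ hdisj
    rw [crr_zero]
    constructor
    · intro i j _ _ S hS _
      rw [Finset.sdiff_self, Finset.subset_empty] at hS
      simp [hS]
    · intro i j _
      refine ⟨∅, Finset.empty_subset _, by simp, fun S hS _ => ?_⟩
      rw [Finset.sdiff_self, Finset.empty_sdiff, Finset.subset_empty] at hS
      simp [hS]
  | succ fuel ih =>
    intro t L X₀ hdisj
    by_cases hL : L.Nonempty
    · by_cases hcap : (X₀ (σ t)).card < k (σ t)
      · -- pick branch
        obtain ⟨b, hb⟩ : ∃ b, σ t = b := ⟨σ t, rfl⟩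
        rw [hb] at hcap
        rw [crr_succ, hb, if_pos hL, if_pos hcap]
        obtain ⟨g, hgdef⟩ : ∃ g, bestItem (v b) L = g := ⟨_, rfl⟩
        rw [hgdef]
        have hgL : g ∈ L := hgdef ▸ (bestItem_spec (v b) hL).1
        have hgmax : ∀ g' ∈ L, v b g' ≤ v b g := by
          rw [← hgdef]; exact (bestItem_spec (v b) hL).2
        set L' := L.erase g with hL'rw
        set X₁ := Function.update X₀ b (insert g (X₀ b)) with hX₁rw
        have hX₁b : X₁ b = insert g (X₀ b) := Function.update_self _ _ _
        have hX₁ne : ∀ a, a ≠ b → X₁ a = X₀ a := fun a ha => Function.update_of_ne ha _ _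
        have hgX₀ : ∀ a, g ∉ X₀ a := fun a => Finset.disjoint_right.1 (hdisj a) hgL
        have hdisj' : ∀ a, Disjoint (X₁ a) L' := by
          intro a
          by_cases ha : a = b
          · subst ha
            rw [hX₁b]
            refine Finset.disjoint_insert_left.2 ⟨Finset.notMem_erase _ _, ?_⟩
            exact Finset.disjoint_of_subset_right (Finset.erase_subset _ _) (hdisj a)
          · rw [hX₁ne a ha]
            exact Finset.disjoint_of_subset_right (Finset.erase_subset _ _) (hdisj a)
        obtain ⟨ihA, ihB⟩ := ih (t + 1) L' X₁ hdisj'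
        set W := crr k v σ fuel (t + 1) L' X₁ with hW
        have hmono : ∀ a, X₁ a ⊆ W a := fun a => crr_mono k v σ fuel (t + 1) L' X₁ a
        have hpool : ∀ a, W a ⊆ X₁ a ∪ L' := fun a => crr_subset k v σ fuel (t + 1) L' X₁ a
        have hgWb : g ∈ W b := hmono b (by rw [hX₁b]; exact Finset.mem_insert_self _ _)
        have hkey : W b \ X₀ b = insert g (W b \ X₁ b) := by
          ext x
          simp only [Finset.mem_sdiff, Finset.mem_insert, hX₁b]
          constructor
          · rintro ⟨h1, h2⟩
            by_cases hx : x = g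
            · exact Or.inl hx
            · refine Or.inr ⟨h1, fun hm => ?_⟩
              rcases hm with h | h
              · exact hx h
              · exact h2 h
          · rintro (rfl | ⟨h1, h2⟩)
            · exact ⟨hgWb, hgX₀ b⟩
            · exact ⟨h1, fun hm => h2 (Or.inr hm)⟩
        have hgnd : g ∉ W b \ X₁ b := fun h =>
          (Finset.mem_sdiff.1 h).2 (by rw [hX₁b]; exact Finset.mem_insert_self _ _)
        have hsumb : (W b \ X₀ b).sum (v b) = v b g + (W b \ X₁ b).sum (v b) := by
          rw [hkey, Finset.sum_insert hgnd]
        have hcard₁ : (X₁ b).card = (X₀ b).card + 1 := by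
          rw [hX₁b, Finset.card_insert_of_notMem (hgX₀ b)]
        have hfromL : ∀ a x, x ∈ W a \ X₁ a → x ∈ L := by
          intro a x hx
          rcases Finset.mem_sdiff.1 hx with ⟨h1, h2⟩
          rcases Finset.mem_union.1 (hpool a h1) with h | h
          · exact absurd h h2
          · exact Finset.erase_subset _ _ h
        have keyI : ∀ j : Fin n, b ≠ j → ∀ S ⊆ W j \ X₀ j, S.card + (X₀ b).card ≤ k b →
            S.sum (v b) ≤ (W b \ X₀ b).sum (v b) := by
          intro j hbj S hS hcard
          have hSsub : S ⊆ W j \ X₁ j := by rw [hX₁ne j (Ne.symm hbj)]; exact hS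
          rcases S.eq_empty_or_nonempty with rfl | ⟨s, hsS⟩
          · simp
          obtain ⟨Y, hYsub, hYcard, hYprop⟩ := ihB b j hbj
          obtain ⟨s₀, hs₀S, hrest⟩ :
              ∃ s₀ ∈ S, S.erase s₀ ⊆ (W j \ X₁ j) \ Y := by
            rcases (Y ∩ S).eq_empty_or_nonempty with hYS | ⟨y, hy⟩
            · refine ⟨s, hsS, fun x hx =>
                Finset.mem_sdiff.2 ⟨hSsub (Finset.erase_subset _ _ hx), fun hxY => ?_⟩⟩
              have hmem : x ∈ Y ∩ S := Finset.mem_inter.2 ⟨hxY, Finset.erase_subset _ _ hx⟩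
              rw [hYS] at hmem
              exact absurd hmem (Finset.notMem_empty x)
            · rcases Finset.mem_inter.1 hy with ⟨hyY, hyS⟩
              refine ⟨y, hyS, fun x hx =>
                Finset.mem_sdiff.2 ⟨hSsub (Finset.erase_subset _ _ hx), fun hxY => ?_⟩⟩
              rcases Finset.mem_erase.1 hx with ⟨hxy, hxS⟩
              have hsub2 : ({x, y} : Finset α) ⊆ Y := by
                intro z hz
                rcases Finset.mem_insert.1 hz with rfl | hz
                · exact hxY
                · rw [Finset.mem_singleton.1 hz]; exact hyY
              have hle := Finset.card_le_card hsub2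
              rw [Finset.card_pair hxy] at hle
              omega
          have hs₀L : s₀ ∈ L := hfromL j s₀ (hSsub hs₀S)
          have hcard2 : (S.erase s₀).card + (X₁ b).card ≤ k b := by
            rw [Finset.card_erase_of_mem hs₀S, hcard₁]
            have hpos : 1 ≤ S.card := Finset.card_pos.2 ⟨s₀, hs₀S⟩
            omega
          have h2 := hYprop (S.erase s₀) hrest hcard2
          calc S.sum (v b) = v b s₀ + (S.erase s₀).sum (v b) :=
                (Finset.add_sum_erase S (v b) hs₀S).symm
            _ ≤ v b g + (W b \ X₁ b).sum (v b) := add_le_add (hgmax s₀ hs₀L) h2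
            _ = (W b \ X₀ b).sum (v b) := hsumb.symm
        constructor
        · intro i j hij hbef S hS hcard
          have hbj : b ≠ j := hb ▸ before_ne hbef
          by_cases hbi : b = i
          · subst hbi
            exact keyI j hbj S hS hcard
          · have hti : σ t ≠ i := by rw [hb]; exact hbi
            have hbef' : Before σ (t + 1) i j := before_step hti hbef
            have hres := ihA i j hij hbef' S (by rwa [hX₁ne j (Ne.symm hbj)])
              (by rwa [hX₁ne i (Ne.symm hbi)])
            rwa [hX₁ne i (Ne.symm hbi)] at hres
        · intro i j hij
          by_cases hbj : b = j
          · subst hbj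
            have hgmem : g ∈ W b \ X₀ b := Finset.mem_sdiff.2 ⟨hgWb, hgX₀ b⟩
            refine ⟨{g}, Finset.singleton_subset_iff.2 hgmem, by simp, ?_⟩
            intro S hS hcard
            have hSsub : S ⊆ W b \ X₁ b := by
              intro x hx
              rcases Finset.mem_sdiff.1 (hS hx) with ⟨h1, hxg⟩
              rcases Finset.mem_sdiff.1 h1 with ⟨hW1, hX0⟩
              refine Finset.mem_sdiff.2 ⟨hW1, ?_⟩
              rw [hX₁b]
              intro hm
              rcases Finset.mem_insert.1 hm with rfl | hm
              · exact hxg (Finset.mem_singleton_self _)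
              · exact hX0 hm
            have hbef' : Before σ (t + 1) i b := before_of_pick hex hinj hij hb
            have hres := ihA i b hij hbef' S hSsub (by rwa [hX₁ne i hij])
            rwa [hX₁ne i hij] at hres
          · by_cases hbi : b = i
            · subst hbi
              refine ⟨∅, Finset.empty_subset _, by simp, ?_⟩
              intro S hS hcard
              exact keyI j hbj S (by simpa using hS) hcard
            · obtain ⟨Y, hYsub, hYcard, hYprop⟩ := ihB i j hij
              refine ⟨Y, by rwa [hX₁ne j (Ne.symm hbj)] at hYsub, hYcard, ?_⟩
              intro S hS hcard
              have hres := hYprop S (by rwa [hX₁ne j (Ne.symm hbj)])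
                (by rwa [hX₁ne i (Ne.symm hbi)])
              rwa [hX₁ne i (Ne.symm hbi)] at hres
      · -- skip branch
        have hXeq : crr k v σ (fuel + 1) t L X₀ = crr k v σ fuel (t + 1) L X₀ := by
          rw [crr_succ, if_pos hL, if_neg hcap]
        rw [hXeq]
        obtain ⟨ihA, ihB⟩ := ih (t + 1) L X₀ hdisj
        refine ⟨?_, ihB⟩
        intro i j hij hbef S hS hcard
        by_cases hit : σ t = i
        · have hki : k i ≤ (X₀ i).card := by rw [← hit]; omega
          have hS0 : S = ∅ := Finset.card_eq_zero.1 (by omega)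
          simp [hS0]
        · exact ihA i j hij (before_step hit hbef) S hS hcard
    · -- pool empty
      have hXeq : crr k v σ (fuel + 1) t L X₀ = X₀ := by rw [crr_succ, if_neg hL]
      rw [hXeq]
      constructor
      · intro i j _ _ S hS _
        rw [Finset.sdiff_self, Finset.subset_empty] at hS
        simp [hS]
      · intro i j _
        refine ⟨∅, Finset.empty_subset _, by simp, fun S hS _ => ?_⟩
        rw [Finset.sdiff_self, Finset.empty_sdiff, Finset.subset_empty] at hS
        simp [hS]

lemma cyc_ex {n : ℕ} (hn : 0 < n) (ord : Equiv.Perm (Fin n)) :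
    ∀ t a, ∃ d, d < n ∧ (fun t => ord ⟨t % n, Nat.mod_lt t hn⟩) (t + d) = a := by
  intro t a
  set r : ℕ := (ord.symm a : ℕ) with hr
  have hrn : r < n := (ord.symm a).2
  set m : ℕ := t % n with hm
  have hmn : m < n := Nat.mod_lt t hn
  refine ⟨(r + n - m) % n, Nat.mod_lt _ hn, ?_⟩
  have e1 : m + (r + n - m) = r + n := by omega
  have key : (t + (r + n - m) % n) % n = r := by
    have c1 : (t + (r + n - m) % n) % n = (m + (r + n - m)) % n :=
      Nat.ModEq.add (Nat.mod_modEq t n).symm (Nat.mod_modEq _ n)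
    rw [c1, e1, Nat.add_mod_right, Nat.mod_eq_of_lt hrn]
  show ord _ = a
  refine (Equiv.apply_eq_iff_eq_symm_apply ord).2 (Fin.ext ?_)
  simpa using key

lemma cyc_inj {n : ℕ} (hn : 0 < n) (ord : Equiv.Perm (Fin n)) :
    ∀ x y, (fun t => ord ⟨t % n, Nat.mod_lt t hn⟩) x = (fun t => ord ⟨t % n, Nat.mod_lt t hn⟩) y →
      x % n = y % n := by
  intro x y h
  simp only at h
  simpa using congrArg Fin.val (ord.injective h)

/-- The outcome of Capped Round Robin on a single category is F-EF1: for every pair of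
agents `i ≠ j` there is a set `Y ⊆ X j` with at most one item such that `i`'s value for
her own bundle is at least her feasible value (over capacity-respecting subsets) of
`X j \ Y`. -/
theorem stmt4 {α : Type*} [DecidableEq α] [LinearOrder α] [Inhabited α] {n : ℕ}
    (hn : 0 < n) (M : Finset α) (k : Fin n → ℕ) (hk : M.card ≤ ∑ i, k i)
    (v : Fin n → α → ℕ) (ord : Equiv.Perm (Fin n))
    (X : Fin n → Finset α)
    (hX : X = crr k v (fun t => ord ⟨t % n, Nat.mod_lt t hn⟩)
      (n * (M.card + 1)) 0 M (fun _ => ∅)) :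
    ∀ i j, i ≠ j → ∃ Y ⊆ X j, Y.card ≤ 1 ∧
      ∀ S ⊆ X j \ Y, S.card ≤ k i → S.sum (v i) ≤ (X i).sum (v i) := by
  subst hX
  obtain ⟨-, hB⟩ := crr_key k v (fun t => ord ⟨t % n, Nat.mod_lt t hn⟩)
    (cyc_ex hn ord) (cyc_inj hn ord) (n * (M.card + 1)) 0 M (fun _ => ∅)
    (fun a => by simp)
  intro i j hij
  obtain ⟨Y, hY1, hY2, hY3⟩ := hB i j hij
  rw [Finset.sdiff_empty] at hY1
  refine ⟨Y, hY1, hY2, ?_⟩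
  intro S hS hcard
  have hres := hY3 S (by rw [Finset.sdiff_empty]; exact hS) (by simpa using hcard)
  simpa using hres
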